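/- arXiv:2605.23331 — 4 statements merged into one kernel-verified Lean document; each statement's English description precedes it below -/
import Mathlib

section
/- For the BBPSSW purification map F'(F) = (10F² − 2F + 1)/(8F² − 4F + 5), we have F'(F) > F for all F with 1/2 < F < 1, i.e., one round of purification strictly increases the fidelity whenever the input fidelity is strictly between 1/2 and 1. -/
noncomputable def Fp (F : ℝ) : ℝ := (10 * F ^ 2 - 2 * F + 1) / (8 * F ^ 2 - 4 * F + 5)

/-- One round of BBPSSW purification strictly increases fidelity on `(1/2, 1)`. -/
theorem bbpssw_increases (F : ℝ) (h1 : 1 / 2 < F) (h2 : F < 1) : Fp F > F := by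
  have hd : 0 < 8 * F ^ 2 - 4 * F + 5 := by nlinarith
  rw [Fp, gt_iff_lt, lt_div_iff₀ hd]
  nlinarith [sq_nonneg (F - 1), sq_nonneg (2*F - 1)]
end

section
/- The BBPSSW map F'(F) = (10F² − 2F + 1)/(8F² − 4F + 5) has exactly the fixed points F = 1/2 and F = 1 in the interval [1/2, 1]. -/
/-- On `[1/2, 1]` the BBPSSW map has exactly the fixed points `1/2` and `1`. -/
theorem bbpssw_fixed_points (F : ℝ) (hF : F ∈ Set.Icc (1 / 2 : ℝ) 1) :
    Fp F = F ↔ F = 1 / 2 ∨ F = 1 := by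
  obtain ⟨h1, h2⟩ := hF
  have hden : 8 * F ^ 2 - 4 * F + 5 ≠ 0 := by nlinarith [sq_nonneg (2*F - 1)]
  rw [Fp, div_eq_iff hden]
  constructor
  · intro h
    have hcubic : (F - 1) * (2 * F - 1) * (4 * F - 1) = 0 := by nlinarith [h]
    have h4 : 4 * F - 1 ≠ 0 := by intro h4; linarith
    rcases mul_eq_zero.1 hcubic with h' | h'
    · rcases mul_eq_zero.1 h' with h'' | h''
      · right; linarith
      · left; linarith
    · exact absurd h' h4
  · rintro (rfl | rfl) <;> ring
end

section
/- For any starting fidelity F_0 with 1/2 < F_0 < 1, the sequence of iterates F_{k+1} = F'(F_k) under the BBPSSW map F'(F) = (10F² − 2F + 1)/(8F² − 4F + 5) is strictly increasing and converges to 1. -/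
lemma den_pos (F : ℝ) : 0 < 8 * F ^ 2 - 4 * F + 5 := by
  nlinarith [sq_nonneg (4 * F - 1)]

lemma Fp_gt {F : ℝ} (h1 : 1 / 2 < F) (h2 : F < 1) : F < Fp F := by
  rw [Fp, lt_div_iff₀ (den_pos F)]
  nlinarith [mul_pos (mul_pos (sub_pos.2 h2) (by linarith : (0:ℝ) < 4 * F - 1))
    (by linarith : (0:ℝ) < 2 * F - 1)]

lemma Fp_lt_one {F : ℝ} (h2 : F < 1) (h1 : 1 / 2 < F) : Fp F < 1 := by
  rw [Fp, div_lt_one (den_pos F)]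
  nlinarith

/-- Iterating BBPSSW from any `F₀ ∈ (1/2, 1)` yields a strictly increasing sequence
converging to `1`. -/
theorem bbpssw_iterates (F0 : ℝ) (h1 : 1 / 2 < F0) (h2 : F0 < 1)
    (f : ℕ → ℝ) (hf0 : f 0 = F0) (hrec : ∀ k, f (k + 1) = Fp (f k)) :
    StrictMono f ∧ Filter.Tendsto f Filter.atTop (nhds 1) := by
  have hinv : ∀ k, 1 / 2 < f k ∧ f k < 1 := by
    intro k
    induction k with
    | zero => rw [hf0]; exact ⟨h1, h2⟩
    | succ n ih =>
      rw [hrec]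
      exact ⟨lt_trans ih.1 (Fp_gt ih.1 ih.2), Fp_lt_one ih.2 ih.1⟩
  have hmono : StrictMono f := by
    apply strictMono_nat_of_lt_succ
    intro n
    rw [hrec]
    exact Fp_gt (hinv n).1 (hinv n).2
  refine ⟨hmono, ?_⟩
  have hbdd : BddAbove (Set.range f) := ⟨1, by rintro x ⟨k, rfl⟩; exact (hinv k).2.le⟩
  set L := ⨆ k, f k with hL
  have htend : Filter.Tendsto f Filter.atTop (nhds L) :=
    tendsto_atTop_ciSup hmono.monotone hbdd
  have hLle : L ≤ 1 := ciSup_le fun k => (hinv k).2.le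
  have hLgt : 1 / 2 < L := lt_of_lt_of_le (hf0 ▸ h1) (le_ciSup hbdd 0)
  -- L is a fixed point of Fp
  have hdenL : (8 * L ^ 2 - 4 * L + 5) ≠ 0 := ne_of_gt (den_pos L)
  have hcont : ContinuousAt Fp L := by
    apply ContinuousAt.div
    · fun_prop
    · fun_prop
    · exact hdenL
  have ht1 : Filter.Tendsto (fun k => f (k + 1)) Filter.atTop (nhds L) :=
    htend.comp (Filter.tendsto_add_atTop_nat 1)
  have ht2 : Filter.Tendsto (fun k => Fp (f k)) Filter.atTop (nhds (Fp L)) :=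
    hcont.tendsto.comp htend
  have hfix : Fp L = L := by
    apply tendsto_nhds_unique _ ht1
    simpa only [hrec] using ht2
  have hLeq : L = 1 := by
    rw [Fp, div_eq_iff hdenL] at hfix
    nlinarith [mul_pos (by linarith : (0:ℝ) < 4 * L - 1) (by linarith : (0:ℝ) < 2 * L - 1),
      sq_nonneg (L - 1)]
  rwa [hLeq] at htend
end

section
/- The BBPSSW map F' is strictly monotonically increasing on the interval [1/2, 1]. -/
/-- The BBPSSW map is strictly increasing on `[1/2, 1]`. -/
theorem bbpssw_strictMono : StrictMonoOn Fp (Set.Icc (1 / 2 : ℝ) 1) := by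
  intro a ha b hb hab
  obtain ⟨ha1, ha2⟩ := ha
  obtain ⟨hb1, hb2⟩ := hb
  have hda : (0:ℝ) < 8 * a ^ 2 - 4 * a + 5 := by nlinarith [sq_nonneg (2*a - 1)]
  have hdb : (0:ℝ) < 8 * b ^ 2 - 4 * b + 5 := by nlinarith [sq_nonneg (2*b - 1)]
  unfold Fp
  rw [div_lt_div_iff₀ hda hdb]
  nlinarith [sq_nonneg (a - b), sq_nonneg (a + b - 1), mul_pos (sub_pos.mpr hab) (sub_pos.mpr hab), sq_nonneg (2*a - 1), sq_nonneg (2*b - 1), mul_pos (sub_pos.mpr hab) hda]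
end
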